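/- For every λ ∈ (1/2, 1) and every α > 1, the Hausdorff dimension of E_λ(α) is at most 1/α. -/

import Mathlib

open MeasureTheory Filter Set
open scoped ENNReal

/-- The set `F_{λ,n}` of partial sums `(1-λ)∑_{k=0}^n a_k λ^k`, `a_k ∈ {0,1}`. -/
def Fset (lam : ℝ) (n : ℕ) : Set ℝ :=
  {y | ∃ a : ℕ → ℝ, (∀ k, a k = 0 ∨ a k = 1) ∧
    y = (1 - lam) * ∑ k ∈ Finset.range (n + 1), a k * lam ^ k}

/-- The set `E_{λ,n}(α)` of points of `[0,1]` within `2^{-αn}` of `F_{λ,n}`. -/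
noncomputable def Eapprox (lam al : ℝ) (n : ℕ) : Set ℝ :=
  {x ∈ Set.Icc (0 : ℝ) 1 | ∃ y ∈ Fset lam n, |x - y| < (2 : ℝ) ^ (-(al * n))}

/-- The set `E_λ(α) = limsup_n E_{λ,n}(α)`. -/
noncomputable def Elimsup (lam al : ℝ) : Set ℝ :=
  ⋂ N : ℕ, ⋃ n : ℕ, ⋃ (_ : N ≤ n), Eapprox lam al n

/-!
`F_{λ,n}` has at most `2^{n+1}` points, so `E_{λ,n}(α)` is covered by `2^{n+1}` intervals of
length `2 · 2^{-αn}`. For `d > 1/α` the costs `2^{n+1} (2 · 2^{-αn})^d` form a convergent geometric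
series, so the covers of `E_λ(α)` by the intervals of index `≥ N` have `d`-cost tending to `0`,
whence `μH[d] (E_λ(α)) = 0`.
-/

open Topology Metric

theorem ENNReal.tendsto_iSup_ge_nhds_zero {r : ℕ → ℝ≥0∞} (hr : Tendsto r atTop (𝓝 0)) :
    Tendsto (fun N => ⨆ n ≥ N, r n) atTop (𝓝 0) := by
  rw [ENNReal.tendsto_atTop_zero] at hr ⊢
  intro ε hε
  obtain ⟨N, hN⟩ := hr ε hε
  exact ⟨N, fun M hM => iSup₂_le fun n hn => hN n (hM.trans hn)⟩

theorem hausdorffMeasure_limsup_eq_zero {X : Type*} [EMetricSpace X] [MeasurableSpace X]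
    [BorelSpace X] {ι : ℕ → Type*} [∀ n, Countable (ι n)] {d : ℝ} {E : ℕ → Set X}
    {r : ℕ → ℝ≥0∞} (t : ∀ n, ι n → Set X) (hE : ∀ n, E n ⊆ ⋃ i, t n i)
    (ht : ∀ n i, ediam (t n i) ≤ r n) (hr : Tendsto r atTop (𝓝 0))
    (hsum : ∑' n, ∑' i, ediam (t n i) ^ d ≠ ∞) :
    μH[d] (limsup E atTop) = 0 := by
  have hcover : ∀ N, limsup E atTop ⊆ ⋃ p : Σ n, ι (n + N), t (p.1 + N) p.2 := by
    intro N x hx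
    rw [limsup_eq_iInf_iSup_of_nat] at hx
    simp only [iInf_eq_iInter, iSup_eq_iUnion, mem_iInter, mem_iUnion] at hx
    obtain ⟨n, hn, hxn⟩ := hx N
    obtain ⟨k, rfl⟩ := Nat.exists_eq_add_of_le' hn
    obtain ⟨i, hi⟩ := mem_iUnion.1 (hE _ hxn)
    exact mem_iUnion.2 ⟨⟨k, i⟩, hi⟩
  have hle := Measure.hausdorffMeasure_le_liminf_tsum d (limsup E atTop) _
    (ENNReal.tendsto_iSup_ge_nhds_zero hr) (fun N (p : Σ n, ι (n + N)) => t (p.1 + N) p.2)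
    (Eventually.of_forall fun N p =>
      (ht _ _).trans (le_iSup₂ (f := fun n (_ : n ≥ N) => r n) _ (Nat.le_add_left _ _)))
    (Eventually.of_forall hcover)
  have htail : Tendsto (fun N => ∑' p : Σ n, ι (n + N), ediam (t (p.1 + N) p.2) ^ d)
      atTop (𝓝 0) := by
    simp_rw [ENNReal.tsum_sigma']
    exact ENNReal.tendsto_sum_nat_add _ hsum
  exact nonpos_iff_eq_zero.1 (hle.trans_eq htail.liminf_eq)

noncomputable def Fpoint (lam : ℝ) (n : ℕ) (b : Fin (n + 1) → Bool) : ℝ :=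
  (1 - lam) * ∑ k : Fin (n + 1), (if b k then (1 : ℝ) else 0) * lam ^ (k : ℕ)

theorem Fset_subset_range_Fpoint (lam : ℝ) (n : ℕ) : Fset lam n ⊆ range (Fpoint lam n) := by
  classical
  rintro _ ⟨a, ha, rfl⟩
  refine ⟨fun k => decide (a k = 1), ?_⟩
  rw [Fpoint, ← Fin.sum_univ_eq_sum_range (fun k => a k * lam ^ k)]
  congr 1
  refine Finset.sum_congr rfl fun k _ => ?_
  rcases ha k with h | h <;> simp [h]

theorem Eapprox_subset_iUnion_closedBall (lam al : ℝ) (n : ℕ) :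
    Eapprox lam al n ⊆ ⋃ b, closedBall (Fpoint lam n b) ((2 : ℝ) ^ (-(al * n))) := by
  rintro x ⟨-, y, hy, hxy⟩
  obtain ⟨b, rfl⟩ := Fset_subset_range_Fpoint lam n hy
  exact mem_iUnion.2 ⟨b, mem_closedBall.2 hxy.le⟩

theorem two_pow_mul_two_mul_rpow_eq {al d : ℝ} (n : ℕ) :
    (2 : ℝ) ^ (n + 1) * (2 * 2 ^ (-(al * n))) ^ d = 2 ^ (1 + d) * (2 ^ (1 - al * d)) ^ n := by
  have h2 : (0 : ℝ) < 2 := two_pos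
  have hρ : 2 * (2 : ℝ) ^ (-(al * n)) = 2 ^ (1 - al * n) := by
    rw [sub_eq_add_neg, Real.rpow_add h2, Real.rpow_one]
  rw [hρ, ← Real.rpow_natCast, ← Real.rpow_mul h2.le, ← Real.rpow_mul_natCast h2.le,
    ← Real.rpow_add h2, ← Real.rpow_add h2]
  congr 1
  push_cast
  ring

theorem summable_two_pow_mul_two_mul_rpow {al d : ℝ} (h : 1 < al * d) :
    Summable fun n : ℕ => (2 : ℝ) ^ (n + 1) * (2 * 2 ^ (-(al * n))) ^ d := by
  simp_rw [two_pow_mul_two_mul_rpow_eq]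
  exact (summable_geometric_of_lt_one (by positivity)
    (Real.rpow_lt_one_of_one_lt_of_neg one_lt_two (by linarith))).mul_left _

theorem tendsto_two_mul_two_rpow_neg_mul {al : ℝ} (hal : 0 < al) :
    Tendsto (fun n : ℕ => 2 * (2 : ℝ) ^ (-(al * n))) atTop (𝓝 0) := by
  simp_rw [← neg_mul, Real.rpow_mul_natCast two_pos.le]
  simpa using (tendsto_pow_atTop_nhds_zero_of_lt_one (by positivity)
    (Real.rpow_lt_one_of_one_lt_of_neg one_lt_two (neg_neg_of_pos hal))).const_mul (2 : ℝ)

theorem hausdorffMeasure_Elimsup_eq_zero (lam : ℝ) {al d : ℝ} (hal : 0 < al) (hd : 1 < al * d) :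
    μH[d] (Elimsup lam al) = 0 := by
  have hdiam : ∀ n b, ediam (closedBall (Fpoint lam n b) ((2 : ℝ) ^ (-(al * n)))) =
      ENNReal.ofReal (2 * 2 ^ (-(al * n))) := by
    intro n b
    rw [Real.closedBall_eq_Icc, Real.ediam_Icc]
    congr 1
    ring
  have hsum : ∀ n, ∑' b, ediam (closedBall (Fpoint lam n b) ((2 : ℝ) ^ (-(al * n)))) ^ d =
      ENNReal.ofReal (2 ^ (n + 1) * (2 * 2 ^ (-(al * n))) ^ d) := by
    intro n
    rw [tsum_fintype, ENNReal.ofReal_mul (by positivity), ENNReal.ofReal_pow zero_le_two,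
      ← ENNReal.ofReal_rpow_of_pos (by positivity)]
    simp only [hdiam, Finset.sum_const, Finset.card_univ, Fintype.card_fun, Fintype.card_bool,
      Fintype.card_fin, nsmul_eq_mul]
    norm_num
  rw [show Elimsup lam al = limsup (Eapprox lam al) atTop by rw [limsup_eq_iInf_iSup_of_nat]; rfl]
  refine hausdorffMeasure_limsup_eq_zero _ (Eapprox_subset_iUnion_closedBall lam al)
    (fun n b => (hdiam n b).le)
    (by simpa using ENNReal.tendsto_ofReal (tendsto_two_mul_two_rpow_neg_mul hal)) ?_
  simp_rw [hsum]
  rw [← ENNReal.ofReal_tsum_of_nonneg (fun n => by positivity)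
    (summable_two_pow_mul_two_mul_rpow hd)]
  exact ENNReal.ofReal_ne_top

theorem stmt16_general (lam al : ℝ) (hal : 1 < al) :
    dimH (Elimsup lam al) ≤ ENNReal.ofReal (1 / al) := by
  have hal0 : 0 < al := one_pos.trans hal
  refine dimH_le fun d hd => le_of_not_gt fun hlt => ?_
  have hd' : 1 < al * d := by
    rw [← ENNReal.ofReal_coe_nnreal, ENNReal.ofReal_lt_ofReal_iff_of_nonneg (by positivity),
      div_lt_iff₀ hal0] at hlt
    linarith
  simp [hausdorffMeasure_Elimsup_eq_zero lam hal0 hd'] at hd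

theorem stmt16 (lam al : ℝ) (hlam : lam ∈ Set.Ioo (1 / 2 : ℝ) 1) (hal : 1 < al) :
    dimH (Elimsup lam al) ≤ ENNReal.ofReal (1 / al) :=
  stmt16_general lam al hal
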